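/- arXiv:1508.01165 — 3 statements merged into one kernel-verified Lean document; each statement's English description precedes it below -/
import Mathlib

section
/- Let Ω ⊂ ℝ³ be a bounded open set, let α, β ∈ ℝ with α ≥ −1/2, and let 1 ≤ p ≤ ∞ with conjugate exponent p' (1/p + 1/p' = 1). There exists a constant C, independent of K, h, x₀ and f (C may depend on Ω, α, β and p), such that for every continuously differentiable function f : ℝ³ → ℝ with compact support contained in Ω, every x₀ ∈ Ω, every h > 0 and every K ≥ 1: ‖σ^α f‖²_{L²(Ω)} ≤ C ‖σ^{α−β} f‖_{L^p(Ω)} · ‖σ^{α+1+β} ∇f‖_{L^{p'}(Ω)}. -/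
/-!
Write `ρ = ‖x - x₀‖² + K²h²`, so that `σ² = ρ`. Integrating by parts along the radial field
`x - x₀`, whose divergence is `N`, gives for `G = ρ^α f²`
`N ∫ G = -∫ ∇G·(x - x₀) = -2 ∫ ρ^α f ∇f·(x - x₀) - 2α ∫ ρ^(α-1) ‖x - x₀‖² f²`.
As `‖x - x₀‖ ≤ ρ^(1/2)`, the first term is at most `2 ∫ ρ^(α+1/2) |f| ‖∇f‖`, and when
`α ≥ 1 - N/2` the second is at most `(N - 2) ∫ G`. Hence `∫ σ^(2α) f² ≤ ∫ σ^(2α+1) |f| ‖∇f‖`, and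
Hölder's inequality for the splitting `σ^(2α+1) = σ^(α-β) σ^(α+1+β)` gives the claim with `C = 1`.
-/

open MeasureTheory Real Module
open scoped ENNReal NNReal RealInnerProductSpace

section Lp

variable {X : Type*} [MeasurableSpace X] {ν : Measure X}

theorem sq_eLpNorm_two_eq_lintegral_ofReal_sq {g : X → ℝ} :
    eLpNorm g 2 ν ^ 2 = ∫⁻ x, ENNReal.ofReal (g x ^ 2) ∂ν := by
  have h := eLpNorm_nnreal_pow_eq_lintegral (μ := ν) (f := g) (p := 2) two_ne_zero
  simp only [NNReal.coe_ofNat, ENNReal.rpow_two, ENNReal.coe_ofNat] at h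
  rw [h]
  congr with x
  rw [Real.enorm_eq_ofReal_abs, ← ENNReal.ofReal_pow (abs_nonneg _), sq_abs]

theorem ofReal_integral_norm_le_eLpNorm_one {F : Type*} [NormedAddCommGroup F] {g : X → F}
    (hg : AEStronglyMeasurable g ν) : ENNReal.ofReal (∫ x, ‖g x‖ ∂ν) ≤ eLpNorm g 1 ν := by
  rw [integral_norm_eq_lintegral_enorm hg, eLpNorm_one_eq_lintegral_enorm]
  exact ENNReal.ofReal_toReal_le

theorem eLpNorm_mul_le_mul_eLpNorm {u v : X → ℝ} (hu : AEStronglyMeasurable u ν)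
    (hv : AEStronglyMeasurable v ν) {p q r : ℝ≥0∞} [p.HolderTriple q r] :
    eLpNorm (fun x => u x * v x) r ν ≤ eLpNorm u p ν * eLpNorm v q ν := by
  simpa using eLpNorm_le_eLpNorm_mul_eLpNorm_of_nnnorm hu hv (· * ·) 1
    (.of_forall fun x => by simp [nnnorm_mul])

end Lp

theorem sqrt_rpow_eq_rpow_half {x : ℝ} (hx : 0 ≤ x) (y : ℝ) : √x ^ y = x ^ (y / 2) := by
  rw [sqrt_eq_rpow, ← rpow_mul hx]
  ring_nf

section RadialWeight

variable {E : Type*} [NormedAddCommGroup E] [InnerProductSpace ℝ E]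

theorem hasFDerivAt_norm_sub_sq_add (x₀ : E) (c : ℝ) (x : E) :
    HasFDerivAt (fun y => ‖y - x₀‖ ^ 2 + c) (2 • innerSL ℝ (x - x₀)) x := by
  simpa using ((hasFDerivAt_id x).sub_const x₀).norm_sq.add_const c

theorem fderiv_rpow_mul_sq_apply_sub {f : E → ℝ} (hf : Differentiable ℝ f) (x₀ : E) {c : ℝ}
    (hc : 0 < c) (α : ℝ) (x : E) :
    fderiv ℝ (fun y => (‖y - x₀‖ ^ 2 + c) ^ α * f y ^ 2) x (x - x₀) =
      (‖x - x₀‖ ^ 2 + c) ^ α * (2 * f x * fderiv ℝ f x (x - x₀)) +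
        2 * α * (‖x - x₀‖ ^ 2 + c) ^ (α - 1) * ‖x - x₀‖ ^ 2 * f x ^ 2 := by
  have hρ : ‖x - x₀‖ ^ 2 + c ≠ 0 := by positivity
  have hG : HasFDerivAt (fun y => (‖y - x₀‖ ^ 2 + c) ^ α * f y ^ 2) _ x :=
    ((hasFDerivAt_norm_sub_sq_add x₀ c x).rpow_const (Or.inl hρ)).mul ((hf x).hasFDerivAt.pow 2)
  rw [hG.fderiv]
  simp only [add_apply, smul_apply, innerSL_apply_apply, real_inner_self_eq_norm_sq, smul_eq_mul,
    nsmul_eq_mul]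
  ring

theorem neg_fderiv_rpow_mul_sq_apply_sub_le {f : E → ℝ} (hf : Differentiable ℝ f) (x₀ : E)
    {c : ℝ} (hc : 0 < c) {α m : ℝ} (hm : 0 ≤ m) (hαm : -(2 * α) ≤ m) (x : E) :
    -fderiv ℝ (fun y => (‖y - x₀‖ ^ 2 + c) ^ α * f y ^ 2) x (x - x₀) ≤
      2 * ((‖x - x₀‖ ^ 2 + c) ^ (α + 1 / 2) * (|f x| * ‖fderiv ℝ f x‖)) +
        m * ((‖x - x₀‖ ^ 2 + c) ^ α * f x ^ 2) := by
  rw [fderiv_rpow_mul_sq_apply_sub hf x₀ hc]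
  set ρ := ‖x - x₀‖ ^ 2 + c
  have hρ : 0 < ρ := by positivity
  have hnorm : ‖x - x₀‖ ≤ ρ ^ (1 / 2 : ℝ) := by
    rw [← sqrt_eq_rpow]
    exact le_sqrt_of_sq_le (by linarith)
  have hdir : |fderiv ℝ f x (x - x₀)| ≤ ‖fderiv ℝ f x‖ * ρ ^ (1 / 2 : ℝ) :=
    ((fderiv ℝ f x).le_opNorm _).trans (by gcongr)
  have hradial : ρ ^ (α - 1) * ‖x - x₀‖ ^ 2 ≤ ρ ^ α := by
    calc ρ ^ (α - 1) * ‖x - x₀‖ ^ 2 ≤ ρ ^ (α - 1) * ρ := by gcongr; linarith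
      _ = ρ ^ α := by rw [← rpow_add_one hρ.ne']; ring_nf
  have hρα : 0 ≤ ρ ^ α := by positivity
  have hρα1 : 0 ≤ ρ ^ (α - 1) := by positivity
  rw [rpow_add hρ]
  have hcross : -(f x * fderiv ℝ f x (x - x₀)) ≤ |f x| * (‖fderiv ℝ f x‖ * ρ ^ (1 / 2 : ℝ)) := by
    calc -(f x * fderiv ℝ f x (x - x₀)) ≤ |f x| * |fderiv ℝ f x (x - x₀)| := by
          rw [← abs_mul]; exact neg_le_abs _
      _ ≤ _ := by gcongr
  have hcurv : -(2 * α * (ρ ^ (α - 1) * ‖x - x₀‖ ^ 2)) ≤ m * ρ ^ α := by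
    rcases le_total 0 α with hα | hα
    · nlinarith [mul_nonneg hρα1 (sq_nonneg ‖x - x₀‖)]
    · nlinarith
  nlinarith [sq_nonneg (f x)]

variable [FiniteDimensional ℝ E] [MeasurableSpace E] [BorelSpace E] {μ : Measure E}
  [μ.IsAddHaarMeasure]

/-- Integration by parts along each vector of an orthonormal basis. -/
theorem integral_fderiv_apply_sub_eq_neg_finrank_mul {G : E → ℝ} (hG : ContDiff ℝ 1 G)
    (hGc : HasCompactSupport G) (x₀ : E) :
    ∫ x, fderiv ℝ G x (x - x₀) ∂μ = -(finrank ℝ E * ∫ x, G x ∂μ) := by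
  set b := stdOrthonormalBasis ℝ E
  have hcoord : ∀ i x, HasFDerivAt (fun y => ⟪b i, y - x₀⟫) (innerSL ℝ (b i)) x := fun i x =>
    (innerSL ℝ (b i)).hasFDerivAt.comp x ((hasFDerivAt_id x).sub_const x₀)
  have hint : ∀ i, Integrable (fun x => ⟪b i, x - x₀⟫ * fderiv ℝ G x (b i)) μ := fun i =>
    (by fun_prop : Continuous fun y => ⟪b i, y - x₀⟫).mul
      ((hG.continuous_fderiv one_ne_zero).clm_apply continuous_const)
      |>.integrable_of_hasCompactSupport (hGc.fderiv_apply (𝕜 := ℝ) (b i)).mul_left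
  have hparts : ∀ i, ∫ x, ⟪b i, x - x₀⟫ * fderiv ℝ G x (b i) ∂μ = -∫ x, G x ∂μ := fun i => by
    have h := integral_bilinear_hasFDerivAt_right_eq_neg_left_of_integrable (μ := μ)
      (B := ContinuousLinearMap.mul ℝ ℝ) (f' := fun _ => innerSL ℝ (b i)) (g' := fderiv ℝ G)
      (v := b i) ?_ (hint i) ?_ (fun x _ => hcoord i x)
      (fun x _ => (hG.differentiable one_ne_zero x).hasFDerivAt)
    · simpa [b.orthonormal.1 i] using h
    · simpa [b.orthonormal.1 i] using hG.continuous.integrable_of_hasCompactSupport hGc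
    · exact ((by fun_prop : Continuous fun y => ⟪b i, y - x₀⟫).mul hG.continuous)
        |>.integrable_of_hasCompactSupport hGc.mul_left
  have hexpand : ∀ x, fderiv ℝ G x (x - x₀) = ∑ i, ⟪b i, x - x₀⟫ * fderiv ℝ G x (b i) := by
    intro x
    conv_lhs => rw [← b.sum_repr' (x - x₀)]
    simp [map_sum, map_smul]
  simp_rw [hexpand, integral_finsetSum _ fun i _ => hint i, hparts]
  simp

theorem integral_rpow_mul_sq_le {f : E → ℝ} (hf : ContDiff ℝ 1 f) (hfc : HasCompactSupport f)
    (x₀ : E) {c : ℝ} (hc : 0 < c) (hE : 2 ≤ finrank ℝ E) {α : ℝ}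
    (hα : 1 - finrank ℝ E / 2 ≤ α) :
    ∫ x, (‖x - x₀‖ ^ 2 + c) ^ α * f x ^ 2 ∂μ ≤
      ∫ x, (‖x - x₀‖ ^ 2 + c) ^ (α + 1 / 2) * (|f x| * ‖fderiv ℝ f x‖) ∂μ := by
  set G := fun y => (‖y - x₀‖ ^ 2 + c) ^ α * f y ^ 2
  set D := fun y => (‖y - x₀‖ ^ 2 + c) ^ (α + 1 / 2) * (|f y| * ‖fderiv ℝ f y‖)
  have hn : (2 : ℝ) ≤ finrank ℝ E := by exact_mod_cast hE
  have hρ : ∀ r : ℝ, ContDiff ℝ 1 fun y : E => (‖y - x₀‖ ^ 2 + c) ^ r := fun r =>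
    (((contDiff_id.sub contDiff_const).norm_sq ℝ).add contDiff_const).rpow_const_of_ne
      fun y => by positivity
  have hG : ContDiff ℝ 1 G := (hρ α).mul (hf.pow 2)
  have hGc : HasCompactSupport G := hfc.mono fun y hy => by simp_all [G]
  have hGi : Integrable G μ := hG.continuous.integrable_of_hasCompactSupport hGc
  have hDi : Integrable D μ :=
    ((hρ _).continuous.mul (hf.continuous.abs.mul (hf.continuous_fderiv one_ne_zero).norm))
      |>.integrable_of_hasCompactSupport (hfc.mono fun y hy => by simp_all)
  have hG'i : Integrable (fun x => fderiv ℝ G x (x - x₀)) μ :=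
    ((hG.continuous_fderiv one_ne_zero).clm_apply (continuous_id.sub continuous_const))
      |>.integrable_of_hasCompactSupport (hGc.mono' fun x hx =>
        support_fderiv_subset ℝ fun h => hx (by simp [h]))
  have hmono : ∫ x, -fderiv ℝ G x (x - x₀) ∂μ ≤ ∫ x, 2 * D x + (finrank ℝ E - 2) * G x ∂μ :=
    integral_mono hG'i.neg ((hDi.const_mul 2).add (hGi.const_mul _)) fun x =>
      neg_fderiv_rpow_mul_sq_apply_sub_le (hf.differentiable one_ne_zero) x₀ hc
        (by linarith) (by linarith) x
  rw [integral_neg, integral_fderiv_apply_sub_eq_neg_finrank_mul hG hGc x₀,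
    integral_add (hDi.const_mul 2) (hGi.const_mul _), integral_const_mul,
    integral_const_mul] at hmono
  linarith

theorem sq_eLpNorm_sqrt_rpow_mul_le {f : E → ℝ} (hf : ContDiff ℝ 1 f) (hfc : HasCompactSupport f)
    (x₀ : E) {c : ℝ} (hc : 0 < c) (hE : 2 ≤ finrank ℝ E) {α : ℝ}
    (hα : 1 - finrank ℝ E / 2 ≤ α) (β : ℝ) {p p' : ℝ≥0∞} [p.HolderTriple p' 1] :
    eLpNorm (fun x => √(‖x - x₀‖ ^ 2 + c) ^ α * f x) 2 μ ^ 2 ≤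
      eLpNorm (fun x => √(‖x - x₀‖ ^ 2 + c) ^ (α - β) * f x) p μ *
        eLpNorm (fun x => √(‖x - x₀‖ ^ 2 + c) ^ (α + 1 + β) * ‖fderiv ℝ f x‖) p' μ := by
  have hρ : ∀ x : E, 0 < ‖x - x₀‖ ^ 2 + c := fun x => by positivity
  have hσ : ∀ r : ℝ, Continuous fun x : E => √(‖x - x₀‖ ^ 2 + c) ^ r := fun r =>
    (by fun_prop : Continuous fun x : E => √(‖x - x₀‖ ^ 2 + c)).rpow_const
      fun x => Or.inl (sqrt_pos.2 (hρ x)).ne'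
  have hu : Continuous fun x => √(‖x - x₀‖ ^ 2 + c) ^ (α - β) * f x := (hσ _).mul hf.continuous
  have hv : Continuous fun x => √(‖x - x₀‖ ^ 2 + c) ^ (α + 1 + β) * ‖fderiv ℝ f x‖ :=
    (hσ _).mul (hf.continuous_fderiv one_ne_zero).norm
  have hsq : ∀ x, (√(‖x - x₀‖ ^ 2 + c) ^ α * f x) ^ 2 = (‖x - x₀‖ ^ 2 + c) ^ α * f x ^ 2 :=
    fun x => by
      rw [sqrt_rpow_eq_rpow_half (hρ x).le, mul_pow, sq ((_ : ℝ) ^ _), ← rpow_add (hρ x)]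
      ring_nf
  have hprod : ∀ x, ‖√(‖x - x₀‖ ^ 2 + c) ^ (α - β) * f x *
      (√(‖x - x₀‖ ^ 2 + c) ^ (α + 1 + β) * ‖fderiv ℝ f x‖)‖ =
      (‖x - x₀‖ ^ 2 + c) ^ (α + 1 / 2) * (|f x| * ‖fderiv ℝ f x‖) := fun x => by
    have hsplit : (‖x - x₀‖ ^ 2 + c) ^ (α + 1 / 2) =
        (‖x - x₀‖ ^ 2 + c) ^ ((α - β) / 2) * (‖x - x₀‖ ^ 2 + c) ^ ((α + 1 + β) / 2) := by
      rw [← rpow_add (hρ x)]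
      ring_nf
    rw [sqrt_rpow_eq_rpow_half (hρ x).le, sqrt_rpow_eq_rpow_half (hρ x).le, hsplit, norm_mul,
      norm_mul, norm_mul, norm_of_nonneg (rpow_nonneg (hρ x).le _),
      norm_of_nonneg (rpow_nonneg (hρ x).le _), norm_norm, Real.norm_eq_abs]
    ring
  have hGi : Integrable (fun x => (‖x - x₀‖ ^ 2 + c) ^ α * f x ^ 2) μ :=
    ((by fun_prop : Continuous fun x : E => ‖x - x₀‖ ^ 2 + c).rpow_const
      fun x => Or.inl (hρ x).ne').mul (hf.continuous.pow 2)
      |>.integrable_of_hasCompactSupport (hfc.mono fun y hy => by simp_all)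
  calc eLpNorm (fun x => √(‖x - x₀‖ ^ 2 + c) ^ α * f x) 2 μ ^ 2
      = ENNReal.ofReal (∫ x, (‖x - x₀‖ ^ 2 + c) ^ α * f x ^ 2 ∂μ) := by
        rw [sq_eLpNorm_two_eq_lintegral_ofReal_sq, ofReal_integral_eq_lintegral_ofReal hGi
          (.of_forall fun x => by positivity)]
        simp_rw [hsq]
    _ ≤ ENNReal.ofReal (∫ x, (‖x - x₀‖ ^ 2 + c) ^ (α + 1 / 2) * (|f x| * ‖fderiv ℝ f x‖) ∂μ) :=
        ENNReal.ofReal_le_ofReal (integral_rpow_mul_sq_le hf hfc x₀ hc hE hα)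
    _ ≤ eLpNorm (fun x => √(‖x - x₀‖ ^ 2 + c) ^ (α - β) * f x *
          (√(‖x - x₀‖ ^ 2 + c) ^ (α + 1 + β) * ‖fderiv ℝ f x‖)) 1 μ := by
        simp_rw [← hprod]
        exact ofReal_integral_norm_le_eLpNorm_one (hu.mul hv).aestronglyMeasurable
    _ ≤ _ := eLpNorm_mul_le_mul_eLpNorm hu.aestronglyMeasurable hv.aestronglyMeasurable

end RadialWeight

theorem weighted_gagliardo_nirenberg_general (Ω : Set (EuclideanSpace ℝ (Fin 3)))
    (α β : ℝ) (hα : -(1/2 : ℝ) ≤ α) (p p' : ℝ≥0∞)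
    (hpp' : 1 / p + 1 / p' = 1) :
    ∃ C : ℝ, 0 < C ∧
      ∀ (f : EuclideanSpace ℝ (Fin 3) → ℝ), ContDiff ℝ 1 f → HasCompactSupport f →
        tsupport f ⊆ Ω →
      ∀ x₀ ∈ Ω, ∀ h : ℝ, 0 < h → ∀ K : ℝ, 1 ≤ K →
        let σ : EuclideanSpace ℝ (Fin 3) → ℝ :=
          fun x => Real.sqrt (‖x - x₀‖ ^ 2 + K ^ 2 * h ^ 2)
        (eLpNorm (fun x => σ x ^ α * f x) 2 (volume.restrict Ω)) ^ 2 ≤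
          ENNReal.ofReal C *
            eLpNorm (fun x => σ x ^ (α - β) * f x) p (volume.restrict Ω) *
            eLpNorm (fun x => σ x ^ (α + 1 + β) * ‖fderiv ℝ f x‖) p'
              (volume.restrict Ω) := by
  have : p.HolderTriple p' 1 := ⟨by simpa [one_div] using hpp'⟩
  refine ⟨1, one_pos, fun f hf hfc hfΩ x₀ _ h hh K hK => ?_⟩
  intro σ
  have hfΩ' : Function.support f ⊆ Ω := (subset_tsupport f).trans hfΩ
  have hf'Ω : Function.support (fun x => ‖fderiv ℝ f x‖) ⊆ Ω := fun x hx =>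
    hfΩ (support_fderiv_subset ℝ (norm_ne_zero_iff.mp hx))
  rw [ENNReal.ofReal_one, one_mul,
    eLpNorm_restrict_eq_of_support_subset ((Function.support_mul_subset_right _ _).trans hfΩ'),
    eLpNorm_restrict_eq_of_support_subset ((Function.support_mul_subset_right _ _).trans hfΩ'),
    eLpNorm_restrict_eq_of_support_subset ((Function.support_mul_subset_right _ _).trans hf'Ω)]
  have hdim : finrank ℝ (EuclideanSpace ℝ (Fin 3)) = 3 := finrank_euclideanSpace_fin
  exact sq_eLpNorm_sqrt_rpow_mul_le hf hfc x₀ (by positivity) (by omega)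
    (by rw [hdim]; linarith) β

/-- Lemma 3.4: weighted Gagliardo–Nirenberg-type interpolation inequality in ℝ³ for
    the weight σ(x) = sqrt(|x−x₀|² + K²h²):
    ‖σ^α f‖²_{L²(Ω)} ≤ C ‖σ^{α−β} f‖_{L^p(Ω)} ‖σ^{α+1+β} ∇f‖_{L^{p'}(Ω)}. -/
theorem weighted_gagliardo_nirenberg (Ω : Set (EuclideanSpace ℝ (Fin 3)))
    (hΩo : IsOpen Ω) (hΩb : Bornology.IsBounded Ω)
    (α β : ℝ) (hα : -(1/2 : ℝ) ≤ α) (p p' : ℝ≥0∞) (hp : 1 ≤ p)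
    (hpp' : 1 / p + 1 / p' = 1) :
    ∃ C : ℝ, 0 < C ∧
      ∀ (f : EuclideanSpace ℝ (Fin 3) → ℝ), ContDiff ℝ 1 f → HasCompactSupport f →
        tsupport f ⊆ Ω →
      ∀ x₀ ∈ Ω, ∀ h : ℝ, 0 < h → ∀ K : ℝ, 1 ≤ K →
        let σ : EuclideanSpace ℝ (Fin 3) → ℝ :=
          fun x => Real.sqrt (‖x - x₀‖ ^ 2 + K ^ 2 * h ^ 2)
        (eLpNorm (fun x => σ x ^ α * f x) 2 (volume.restrict Ω)) ^ 2 ≤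
          ENNReal.ofReal C *
            eLpNorm (fun x => σ x ^ (α - β) * f x) p (volume.restrict Ω) *
            eLpNorm (fun x => σ x ^ (α + 1 + β) * ‖fderiv ℝ f x‖) p'
              (volume.restrict Ω) :=
  weighted_gagliardo_nirenberg_general Ω α β hα p p' hpp'
end

section
/- Let M ≥ 1, let 0 = t₀ < t₁ < ⋯ < t_M = T be a partition of (0, T] with time steps k_m = t_m − t_{m−1} and subintervals I_m = (t_{m−1}, t_m], let A ≥ 0, and let g : (0, T] → [0, ∞) be a measurable function satisfying g(t) ≤ A / t_m for all t ∈ I_m and all m = 1, …, M. Then ∫₀^T g(t) dt ≤ A · (1 + log(T / k₁)). -/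
/-!
On each subinterval the integral is at most `k_m * A / t_m`. The first term is
`k₁ * A / t₁ = A` since `t₀ = 0`, and every later one is at most
`A * (log t_m - log t_{m-1})` by `1 - 1/x ≤ log x`, so the remaining sum telescopes
to `A * log (T / t₁)`.
-/

open MeasureTheory Real Finset

theorem sub_div_le_log_sub_log {a b : ℝ} (ha : 0 < a) (hb : 0 < b) :
    (b - a) / b ≤ log b - log a := by
  have h := one_sub_inv_le_log_of_pos (div_pos hb ha)
  rwa [inv_div, log_div hb.ne' ha.ne', one_sub_div hb.ne'] at h

theorem sum_sub_div_le_log_div {t : ℕ → ℝ} {N : ℕ} (ht : ∀ m ≤ N, 0 < t m) :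
    ∑ m ∈ range N, (t (m + 1) - t m) / t (m + 1) ≤ log (t N / t 0) :=
  calc ∑ m ∈ range N, (t (m + 1) - t m) / t (m + 1)
      ≤ ∑ m ∈ range N, (log (t (m + 1)) - log (t m)) := by
        refine sum_le_sum fun m hm => sub_div_le_log_sub_log (ht m ?_) (ht (m + 1) ?_) <;>
          grind
    _ = log (t N / t 0) := by
        rw [sum_range_sub (fun m => log (t m)), log_div (ht N le_rfl).ne' (ht 0 (by omega)).ne']

theorem intervalIntegral_le_sum_mul_of_le_on_Ioc {g : ℝ → ℝ} {t c : ℕ → ℝ} {M : ℕ}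
    (hmono : ∀ m < M, t m ≤ t (m + 1))
    (hint : ∀ m < M, IntegrableOn g (Set.Ioc (t m) (t (m + 1))))
    (hle : ∀ m < M, ∀ s ∈ Set.Ioc (t m) (t (m + 1)), g s ≤ c m) :
    ∫ s in t 0..t M, g s ≤ ∑ m ∈ range M, (t (m + 1) - t m) * c m := by
  rw [← intervalIntegral.sum_integral_adjacent_intervals fun m hm =>
    (intervalIntegrable_iff_integrableOn_Ioc_of_le (hmono m hm)).2 (hint m hm)]
  refine sum_le_sum fun m hm => ?_
  replace hm := mem_range.1 hm
  calc ∫ s in t m..t (m + 1), g s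
      ≤ ∫ _ in Set.Ioc (t m) (t (m + 1)), c m := by
        rw [intervalIntegral.integral_of_le (hmono m hm)]
        exact setIntegral_mono_on (hint m hm) (integrableOn_const measure_Ioc_lt_top.ne)
          measurableSet_Ioc (hle m hm)
    _ = (t (m + 1) - t m) * c m := by
        rw [setIntegral_const, volume_real_Ioc_of_le (hmono m hm), smul_eq_mul]

theorem integrableOn_Ioc_of_nonneg_of_le {g : ℝ → ℝ} {a b C : ℝ} (hg : Measurable g)
    (hnonneg : ∀ s ∈ Set.Ioc a b, 0 ≤ g s) (hle : ∀ s ∈ Set.Ioc a b, g s ≤ C) :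
    IntegrableOn g (Set.Ioc a b) :=
  Measure.integrableOn_of_bounded (M := C) measure_Ioc_lt_top.ne hg.aestronglyMeasurable
    (ae_restrict_of_forall_mem measurableSet_Ioc fun s hs => by
      rw [norm_of_nonneg (hnonneg s hs)]
      exact hle s hs)

/-- Analytic core of Lemma 5.2: if a nonnegative measurable g satisfies
    g(t) ≤ A / t_m on each subinterval I_m = (t_{m−1}, t_m] of a partition
    0 = t₀ < ⋯ < t_M = T, then ∫₀^T g ≤ A (1 + log(T / k₁)). -/
theorem integral_bound_from_smoothing (M : ℕ) (hM : 1 ≤ M) (t : ℕ → ℝ)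
    (ht0 : t 0 = 0) (hmono : ∀ m < M, t m < t (m + 1))
    (A : ℝ) (hA : 0 ≤ A) (g : ℝ → ℝ) (hmeas : Measurable g)
    (hg0 : ∀ s ∈ Set.Ioc (0 : ℝ) (t M), 0 ≤ g s)
    (hbound : ∀ m < M, ∀ s ∈ Set.Ioc (t m) (t (m + 1)), g s ≤ A / t (m + 1)) :
    ∫ s in Set.Ioc (0 : ℝ) (t M), g s ≤
      A * (1 + Real.log (t M / (t 1 - t 0))) := by
  have ht : StrictMonoOn t (Set.Iic M) := strictMonoOn_Iic_of_lt_succ (by simpa using hmono)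
  have hpos : ∀ m ≤ M, 1 ≤ m → 0 < t m := fun m hm h1 => by
    simpa [ht0] using ht (Set.mem_Iic.2 (Nat.zero_le M)) (Set.mem_Iic.2 hm) h1
  have hint : ∀ m < M, IntegrableOn g (Set.Ioc (t m) (t (m + 1))) := fun m hm => by
    have hsub : Set.Ioc (t m) (t (m + 1)) ⊆ Set.Ioc 0 (t M) := by
      rw [← ht0]
      exact Set.Ioc_subset_Ioc (ht.monotoneOn (by simp) (by simp; omega) (by omega))
        (ht.monotoneOn (by simp; omega) (by simp) hm)
    exact integrableOn_Ioc_of_nonneg_of_le hmeas (fun s hs => hg0 s (hsub hs)) (hbound m hm)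
  obtain ⟨N, rfl⟩ := Nat.exists_eq_add_of_le' hM
  calc ∫ s in Set.Ioc 0 (t (N + 1)), g s = ∫ s in t 0..t (N + 1), g s := by
        rw [intervalIntegral.integral_of_le (ht.monotoneOn (by simp) (by simp) (by omega)), ht0]
    _ ≤ ∑ m ∈ range (N + 1), (t (m + 1) - t m) * (A / t (m + 1)) :=
        intervalIntegral_le_sum_mul_of_le_on_Ioc (fun m hm => (hmono m hm).le) hint hbound
    _ = A * (1 + ∑ m ∈ range N, (t (m + 2) - t (m + 1)) / t (m + 2)) := by
        simp only [mul_div_left_comm _ A, ← mul_sum]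
        rw [sum_range_succ', ht0, sub_zero, div_self (hpos 1 (by omega) le_rfl).ne', add_comm]
    _ ≤ A * (1 + log (t (N + 1) / (t 1 - t 0))) := by
        rw [ht0, sub_zero]
        gcongr
        exact sum_sub_div_le_log_div (t := fun m => t (m + 1))
          fun m hm => hpos _ (by omega) (by omega)
end

section
/- Let q ≥ 0 be an integer. There exists a constant C, depending only on q, such that for all real numbers a < b and every point t̃ ∈ (a, b) there is a continuously differentiable function θ : ℝ → ℝ whose support is contained in the open interval (a, b), satisfying ∫_a^b θ(t) p(t) dt = p(t̃) for every real polynomial p of degree at most q, and ‖θ‖_{L¹(a,b)} ≤ C. -/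
/-!
Fix a continuous weight `w ≥ 0`, not identically zero, with compact support in `(0, 1)`. Its
moment matrix `(∫ w tⁱ⁺ʲ)ᵢⱼ` is the Gram matrix of the monomials for the inner product
`⟨f, g⟩ = ∫ w f g`, hence invertible, so for every `s` there is a polynomial `Kₛ` of degree `≤ q`
with `∫ w Kₛ p = p(s)` for all `p` of degree `≤ q`. Its coefficients depend polynomially on `s`,
so `w Kₛ` has `L¹` norm bounded uniformly for `s ∈ [0, 1]`. The affine change of variables from
`(0, 1)` to `(a, b)` preserves both the reproducing property and the `L¹` norm.
-/

open MeasureTheory Polynomial Set Matrix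

namespace RegularizedDelta

variable {n : ℕ}

noncomputable def ofCoeffs (c : Fin n → ℝ) : ℝ[X] :=
  ∑ i, C (c i) * X ^ (i : ℕ)

@[simp]
lemma eval_ofCoeffs (c : Fin n → ℝ) (t : ℝ) : (ofCoeffs c).eval t = ∑ i, c i * t ^ (i : ℕ) := by
  simp [ofCoeffs, eval_finsetSum]

lemma coeff_ofCoeffs (c : Fin n → ℝ) (k : Fin n) : (ofCoeffs c).coeff k = c k := by
  simp [ofCoeffs, finsetSum_coeff, coeff_X_pow, Fin.val_inj]

section MomentMatrix

variable {w : ℝ → ℝ}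

noncomputable def momentMatrix (w : ℝ → ℝ) (n : ℕ) : Matrix (Fin n) (Fin n) ℝ :=
  fun i j => ∫ t, w t * t ^ (i + j : ℕ)

lemma integrable_mul_of_hasCompactSupport {f g : ℝ → ℝ} (hf : Continuous f)
    (hfs : HasCompactSupport f) (hg : Continuous g) : Integrable fun t => f t * g t :=
  (hf.mul hg).integrable_of_hasCompactSupport hfs.mul_right

lemma integral_mul_eval_ofCoeffs_mul_pow (hw : Continuous w) (hws : HasCompactSupport w)
    (c : Fin n → ℝ) (k : Fin n) :
    ∫ t, w t * (ofCoeffs c).eval t * t ^ (k : ℕ) = (c ᵥ* momentMatrix w n) k := by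
  have hsum : ∀ t, w t * (ofCoeffs c).eval t * t ^ (k : ℕ)
      = ∑ i, c i * (w t * t ^ (i + k : ℕ)) := fun t => by
    simp only [eval_ofCoeffs, Finset.mul_sum, Finset.sum_mul, pow_add]
    exact Finset.sum_congr rfl fun i _ => by ring
  rw [integral_congr_ae (.of_forall hsum), integral_finsetSum _ fun i _ =>
    (integrable_mul_of_hasCompactSupport hw hws (by fun_prop)).const_mul _]
  simp only [integral_const_mul, vecMul, dotProduct, momentMatrix]

lemma integral_mul_eval_ofCoeffs_sq (hw : Continuous w) (hws : HasCompactSupport w)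
    (c : Fin n → ℝ) :
    ∫ t, w t * (ofCoeffs c).eval t ^ 2 = (c ᵥ* momentMatrix w n) ⬝ᵥ c := by
  have hsum : ∀ t, w t * (ofCoeffs c).eval t ^ 2
      = ∑ k, c k * (w t * (ofCoeffs c).eval t * t ^ (k : ℕ)) := fun t => by
    rw [sq, ← mul_assoc]
    nth_rewrite 2 [eval_ofCoeffs]
    rw [Finset.mul_sum]
    exact Finset.sum_congr rfl fun k _ => by ring
  rw [integral_congr_ae (.of_forall hsum), integral_finsetSum _ fun k _ =>
    (integrable_mul_of_hasCompactSupport (f := fun t => w t * (ofCoeffs c).eval t)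
      (hw.mul (Polynomial.continuous _)) hws.mul_right (by fun_prop)).const_mul _]
  simp only [integral_const_mul, integral_mul_eval_ofCoeffs_mul_pow hw hws, dotProduct]
  exact Finset.sum_congr rfl fun k _ => mul_comm _ _

lemma isUnit_momentMatrix (hw : Continuous w) (hws : HasCompactSupport w) (hw0 : 0 ≤ w)
    (hne : w ≠ 0) : IsUnit (momentMatrix w n) := by
  refine vecMul_injective_iff_isUnit.1 fun c d hcd => sub_eq_zero.1 ?_
  set e := c - d
  have he : e ᵥ* momentMatrix w n = 0 := by
    simp only [e, sub_vecMul]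
    exact sub_eq_zero.2 hcd
  have hvanish : ∀ t, w t * (ofCoeffs e).eval t ^ 2 = 0 := by
    by_contra! ⟨t, ht⟩
    have hcont : Continuous fun t => w t * (ofCoeffs e).eval t ^ 2 :=
      hw.mul ((Polynomial.continuous _).pow 2)
    have hsupp : HasCompactSupport fun t => w t * (ofCoeffs e).eval t ^ 2 := hws.mul_right
    have hpos := hcont.integral_pos_of_hasCompactSupport_nonneg_nonzero (μ := volume) hsupp
      (fun t => mul_nonneg (hw0 t) (sq_nonneg _)) ht
    rw [integral_mul_eval_ofCoeffs_sq hw hws, he, zero_dotProduct] at hpos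
    exact hpos.false
  obtain ⟨x, hx⟩ : ∃ x, w x ≠ 0 := by simpa [funext_iff] using hne
  have hroots : {t | w t ≠ 0} ⊆ {t | (ofCoeffs e).IsRoot t} := fun t (ht : w t ≠ 0) => by
    simpa [ht, IsRoot] using hvanish t
  have hzero : ofCoeffs e = 0 := eq_zero_of_infinite_isRoot _ <|
    (infinite_of_mem_nhds x ((isOpen_ne_fun hw continuous_const).mem_nhds hx)).mono hroots
  funext k
  rw [← coeff_ofCoeffs e k, hzero, coeff_zero, Pi.zero_apply]

end MomentMatrix

section DeltaKernel

variable {w : ℝ → ℝ}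

/-- `w Kₛ`, where the coefficient vector `c = (sʲ)ⱼ ᵥ* G⁻¹` of `Kₛ` solves `c ᵥ* G = (sᵏ)ₖ`, i.e.
`∫ w Kₛ tᵏ = sᵏ`, for `G` the moment matrix. -/
noncomputable def deltaKernel (w : ℝ → ℝ) (n : ℕ) (s t : ℝ) : ℝ :=
  w t * (ofCoeffs ((fun j : Fin n => s ^ (j : ℕ)) ᵥ* (momentMatrix w n)⁻¹)).eval t

lemma continuous_deltaKernel (hw : Continuous w) (n : ℕ) (s : ℝ) :
    Continuous (deltaKernel w n s) :=
  hw.mul (Polynomial.continuous _)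

lemma contDiff_deltaKernel {m : WithTop ℕ∞} (hw : ContDiff ℝ m w) (n : ℕ) (s : ℝ) :
    ContDiff ℝ m (deltaKernel w n s) :=
  hw.mul (by simpa [-eval_ofCoeffs] using contDiff_aeval (R := ℝ) (𝕜 := ℝ) _ m)

lemma tsupport_deltaKernel_subset (n : ℕ) (s : ℝ) : tsupport (deltaKernel w n s) ⊆ tsupport w :=
  tsupport_mul_subset_left

lemma hasCompactSupport_deltaKernel (hws : HasCompactSupport w) (n : ℕ) (s : ℝ) :
    HasCompactSupport (deltaKernel w n s) :=
  hws.mul_right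

lemma integral_deltaKernel_mul_pow (hw : Continuous w) (hws : HasCompactSupport w)
    (hG : IsUnit (momentMatrix w n)) (s : ℝ) (k : Fin n) :
    ∫ t, deltaKernel w n s t * t ^ (k : ℕ) = s ^ (k : ℕ) := by
  simp only [deltaKernel]
  rw [integral_mul_eval_ofCoeffs_mul_pow hw hws, vecMul_vecMul,
    nonsing_inv_mul _ ((isUnit_iff_isUnit_det _).1 hG), vecMul_one]

lemma integral_deltaKernel_mul_eval (hw : Continuous w) (hws : HasCompactSupport w)
    (hG : IsUnit (momentMatrix w n)) (s : ℝ) {p : ℝ[X]} (hp : p.natDegree < n) :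
    ∫ t, deltaKernel w n s t * p.eval t = p.eval s := by
  have heval : ∀ x, p.eval x = ∑ k : Fin n, p.coeff k * x ^ (k : ℕ) := fun x => by
    rw [eval_eq_sum_range' hp, Fin.sum_univ_eq_sum_range (fun k => p.coeff k * x ^ k)]
  simp only [heval, Finset.mul_sum]
  rw [integral_finsetSum _ fun k _ => integrable_mul_of_hasCompactSupport
    (continuous_deltaKernel hw n s) (hasCompactSupport_deltaKernel hws n s) (by fun_prop)]
  refine Finset.sum_congr rfl fun k _ => ?_
  simp only [mul_left_comm _ (p.coeff _), integral_const_mul,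
    integral_deltaKernel_mul_pow hw hws hG]

noncomputable def deltaKernelBound (w : ℝ → ℝ) (n : ℕ) : ℝ :=
  ∑ i : Fin n, (∑ j, |(momentMatrix w n)⁻¹ j i|) * ∫ t, |w t * t ^ (i : ℕ)|

lemma abs_powers_vecMul_le {A : Matrix (Fin n) (Fin n) ℝ} {s : ℝ} (hs : |s| ≤ 1) (i : Fin n) :
    |((fun j : Fin n => s ^ (j : ℕ)) ᵥ* A) i| ≤ ∑ j, |A j i| :=
  calc |((fun j : Fin n => s ^ (j : ℕ)) ᵥ* A) i| ≤ ∑ j : Fin n, |s ^ (j : ℕ) * A j i| := by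
        simp only [vecMul, dotProduct]
        exact Finset.abs_sum_le_sum_abs _ _
    _ ≤ ∑ j, |A j i| := Finset.sum_le_sum fun j _ => by
        rw [abs_mul, abs_pow]
        exact mul_le_of_le_one_left (abs_nonneg _) (pow_le_one₀ (abs_nonneg _) hs)

lemma integral_abs_deltaKernel_le (hw : Continuous w) (hws : HasCompactSupport w) {s : ℝ}
    (hs : |s| ≤ 1) : ∫ t, |deltaKernel w n s t| ≤ deltaKernelBound w n := by
  set c := (fun j : Fin n => s ^ (j : ℕ)) ᵥ* (momentMatrix w n)⁻¹
  have hint : ∀ i : Fin n, Integrable fun t => |w t * t ^ (i : ℕ)| := fun i =>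
    (integrable_mul_of_hasCompactSupport hw hws (by fun_prop)).abs
  have hpointwise : ∀ t, |deltaKernel w n s t|
      ≤ ∑ i, (∑ j, |(momentMatrix w n)⁻¹ j i|) * |w t * t ^ (i : ℕ)| := fun t =>
    calc |deltaKernel w n s t| = |∑ i, c i * (w t * t ^ (i : ℕ))| := by
          simp only [deltaKernel, eval_ofCoeffs, Finset.mul_sum, c]
          congr 1
          exact Finset.sum_congr rfl fun i _ => by ring
      _ ≤ ∑ i, |c i * (w t * t ^ (i : ℕ))| := Finset.abs_sum_le_sum_abs _ _
      _ ≤ _ := Finset.sum_le_sum fun i _ => by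
          rw [abs_mul]
          exact mul_le_mul_of_nonneg_right (abs_powers_vecMul_le hs i) (abs_nonneg _)
  calc ∫ t, |deltaKernel w n s t|
      ≤ ∫ t, ∑ i, (∑ j, |(momentMatrix w n)⁻¹ j i|) * |w t * t ^ (i : ℕ)| :=
        integral_mono ((continuous_deltaKernel hw n s).integrable_of_hasCompactSupport
          (hasCompactSupport_deltaKernel hws n s)).abs
          (integrable_finsetSum _ fun i _ => (hint i).const_mul _) hpointwise
    _ = deltaKernelBound w n := by
        rw [integral_finsetSum _ fun i _ => (hint i).const_mul _]
        simp only [integral_const_mul, deltaKernelBound]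

end DeltaKernel

section AffineRescale

variable {a b : ℝ}

lemma inv_mul_sub_mem_Ioo_zero_one_iff (hab : a < b) {t : ℝ} :
    (b - a)⁻¹ * (t - a) ∈ Ioo 0 1 ↔ t ∈ Ioo a b := by
  have hba : 0 < b - a := sub_pos.2 hab
  rw [inv_mul_eq_div, mem_Ioo, mem_Ioo, div_pos_iff_of_pos_right hba, div_lt_one hba, sub_pos,
    sub_lt_sub_iff_right]

noncomputable def affineRescale (a b : ℝ) (f : ℝ → ℝ) (t : ℝ) : ℝ :=
  (b - a)⁻¹ * f ((b - a)⁻¹ * (t - a))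

lemma ContDiff.affineRescale {m : WithTop ℕ∞} {f : ℝ → ℝ} (hf : ContDiff ℝ m f) :
    ContDiff ℝ m (affineRescale a b f) :=
  contDiff_const.mul (hf.comp (contDiff_const.mul (contDiff_id.sub contDiff_const)))

lemma tsupport_affineRescale_subset (hab : a < b) {f : ℝ → ℝ} (hf : tsupport f ⊆ Ioo 0 1) :
    tsupport (affineRescale a b f) ⊆ Ioo a b := by
  have hcomp : tsupport (affineRescale a b f) ⊆ tsupport (f ∘ fun t => (b - a)⁻¹ * (t - a)) :=
    tsupport_mul_subset_right (f := fun _ => (b - a)⁻¹)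
  exact hcomp.trans ((tsupport_comp_subset_preimage f (by fun_prop)).trans fun t ht =>
    (inv_mul_sub_mem_Ioo_zero_one_iff hab).1 (hf ht))

lemma integral_affineRescale (hab : a < b) (f : ℝ → ℝ) :
    ∫ t, affineRescale a b f t = ∫ u, f u := by
  have hba : 0 < b - a := sub_pos.2 hab
  simp only [affineRescale]
  rw [integral_const_mul, integral_sub_right_eq_self (fun t => f ((b - a)⁻¹ * t)) a,
    Measure.integral_comp_inv_mul_left, abs_of_pos hba, smul_eq_mul, inv_mul_cancel_left₀ hba.ne']

lemma integral_affineRescale_mul (hab : a < b) (f g : ℝ → ℝ) :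
    ∫ t, affineRescale a b f t * g t = ∫ u, f u * g ((b - a) * u + a) := by
  symm
  rw [← integral_affineRescale hab]
  congr with t
  simp only [affineRescale, mul_inv_cancel_left₀ (sub_pos.2 hab).ne', sub_add_cancel]
  ring

lemma integral_abs_affineRescale (hab : a < b) (f : ℝ → ℝ) :
    ∫ t, |affineRescale a b f t| = ∫ u, |f u| := by
  symm
  rw [← integral_affineRescale hab]
  congr with t
  simp only [affineRescale, abs_mul, abs_inv, abs_of_pos (sub_pos.2 hab)]

end AffineRescale

end RegularizedDelta

open RegularizedDelta in
/-- Existence of the regularized Delta function in time used in Case 2 of the proof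
    of Theorem 2.1: a C¹ function θ supported inside (a,b), reproducing point
    evaluation at t̃ on polynomials of degree ≤ q, with ‖θ‖_{L¹(a,b)} ≤ C where C
    depends only on q. -/
theorem regularized_time_delta_exists (q : ℕ) :
    ∃ C : ℝ, 0 < C ∧
      ∀ a b : ℝ, a < b → ∀ t' ∈ Set.Ioo a b,
        ∃ θ : ℝ → ℝ,
          ContDiff ℝ 1 θ ∧
          tsupport θ ⊆ Set.Ioo a b ∧
          (∀ p : Polynomial ℝ, p.natDegree ≤ q →
            ∫ t in Set.Ioc a b, θ t * p.eval t = p.eval t') ∧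
          (∫ t in Set.Ioc a b, |θ t|) ≤ C := by
  obtain ⟨w, hw_supp, hws, hw, hw_range, hw_half⟩ := exists_contDiff_tsupport_subset (n := 1)
    (Ioo_mem_nhds (by norm_num : (0 : ℝ) < 1 / 2) (by norm_num : (1 / 2 : ℝ) < 1))
  have hw0 : 0 ≤ w := fun t => (hw_range (mem_range_self t)).1
  have hne : w ≠ 0 := fun h => by simp [h] at hw_half
  have hG := isUnit_momentMatrix (n := q + 1) hw.continuous hws hw0 hne
  refine ⟨max (deltaKernelBound w (q + 1)) 1, lt_max_of_lt_right one_pos,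
    fun a b hab t' ht' => ?_⟩
  have hba : 0 < b - a := sub_pos.2 hab
  set s := (b - a)⁻¹ * (t' - a)
  have hs : s ∈ Ioo 0 1 := (inv_mul_sub_mem_Ioo_zero_one_iff hab).2 ht'
  set θ := affineRescale a b (deltaKernel w (q + 1) s)
  have hθ_supp : tsupport θ ⊆ Ioo a b :=
    tsupport_affineRescale_subset hab ((tsupport_deltaKernel_subset _ _).trans hw_supp)
  have hθ_zero : ∀ t ∉ Ioc a b, θ t = 0 := fun t ht =>
    image_eq_zero_of_notMem_tsupport fun h => ht (Ioo_subset_Ioc_self (hθ_supp h))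
  refine ⟨θ, (contDiff_deltaKernel hw _ s).affineRescale, hθ_supp, fun p hp => ?_, ?_⟩
  · rw [setIntegral_eq_integral_of_forall_compl_eq_zero fun t ht => by simp [hθ_zero t ht],
      integral_affineRescale_mul hab]
    have hdeg : (p.comp (C (b - a) * X + C a)).natDegree < q + 1 :=
      natDegree_comp_le.trans_lt (by nlinarith [natDegree_linear_le (a := b - a) (b := a)])
    have hrepr := integral_deltaKernel_mul_eval hw.continuous hws hG s hdeg
    simp only [eval_comp, eval_add, eval_mul, eval_C, eval_X] at hrepr
    rw [hrepr, mul_inv_cancel_left₀ hba.ne', sub_add_cancel]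
  · rw [setIntegral_eq_integral_of_forall_compl_eq_zero fun t ht => by simp [hθ_zero t ht],
      integral_abs_affineRescale hab]
    exact (integral_abs_deltaKernel_le hw.continuous hws
      (abs_le.2 ⟨by linarith [hs.1], hs.2.le⟩)).trans (le_max_left _ _)
end
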